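/- On a (2n+1)-dimensional para-Sasaki-like Riemannian Π-manifold that is para-Einstein-like with constants (a,b,c), one has a + b + c = −2n and the scalar curvature τ of g equals 2n(a − 1). -/

import Mathlib

/-- Pointwise algebraic model of a Riemannian Π-manifold structure:
a real vector space with a positive definite symmetric bilinear form `g`
and an almost paracontact almost paracomplex structure `(φ, ξ, η)`. -/
structure RPiM (V : Type*) [AddCommGroup V] [Module ℝ V] where
  g : V →ₗ[ℝ] V →ₗ[ℝ] ℝ
  phi : V →ₗ[ℝ] V
  xi : V
  eta : V →ₗ[ℝ] ℝ
  g_symm : ∀ x y, g x y = g y x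
  g_posdef : ∀ x, x ≠ 0 → 0 < g x x
  phi_xi : phi xi = 0
  phi_sq : ∀ x, phi (phi x) = x - eta x • xi
  eta_phi : ∀ x, eta (phi x) = 0
  eta_xi : eta xi = 1
  tr_phi : LinearMap.trace ℝ V phi = 0
  compat : ∀ x y, g (phi x) (phi y) = g x y - eta x * eta y

/-!
Evaluating `ρ = a g + b g̃ + c η⊗η` at `(ξ, ξ)`, where `φ ξ = 0` and `g(ξ, ξ) = η(ξ) = 1`, gives
`a + b + c = ρ(ξ, ξ) = -2n`. Tracing it over a `g`-orthonormal basis, with `tr φ = 0` and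
`∑ η(eᵢ)² = |ξ|² = 1`, gives `τ = (2n + 1) a + b + c = 2n (a - 1)`.
-/

/-- `a g + b g̃ + c η⊗η`, with `g̃(x, y) = g(x, φ y) + η(x) η(y)` the associated metric. -/
def RPiM.paraEinsteinLike {V : Type*} [AddCommGroup V] [Module ℝ V] (S : RPiM V)
    (a b c : ℝ) (x y : V) : ℝ :=
  a * S.g x y + b * (S.g x (S.phi y) + S.eta x * S.eta y) + c * (S.eta x * S.eta y)

section OrthonormalBasis

variable {V ι : Type*} [AddCommGroup V] [Module ℝ V] [Fintype ι] [DecidableEq ι]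
  {g : V →ₗ[ℝ] V →ₗ[ℝ] ℝ} (e : Module.Basis ι ℝ V)

theorem apply_basis_eq_repr (he : ∀ i j, g (e i) (e j) = if i = j then 1 else 0)
    (i : ι) (x : V) : g (e i) x = e.repr x i := by
  calc g (e i) x = g (e i) (∑ j, e.repr x j • e j) := by rw [e.sum_repr]
    _ = e.repr x i := by
        simp only [map_sum, map_smul, smul_eq_mul, he, mul_ite, mul_one, mul_zero,
          Finset.sum_ite_eq, Finset.mem_univ, if_true]

theorem sum_apply_basis_mul_self (he : ∀ i j, g (e i) (e j) = if i = j then 1 else 0)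
    (x : V) : ∑ i, g (e i) x * g (e i) x = g x x := by
  calc ∑ i, g (e i) x * g (e i) x = ∑ i, e.repr x i * g (e i) x := by
        simp only [apply_basis_eq_repr e he]
    _ = g (∑ i, e.repr x i • e i) x := by
        simp only [map_sum, map_smul, LinearMap.sum_apply, LinearMap.smul_apply, smul_eq_mul]
    _ = g x x := by rw [e.sum_repr]

theorem sum_apply_basis_map_eq_trace (he : ∀ i j, g (e i) (e j) = if i = j then 1 else 0)
    (f : V →ₗ[ℝ] V) : ∑ i, g (e i) (f (e i)) = LinearMap.trace ℝ V f := by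
  simp [LinearMap.trace_eq_matrix_trace ℝ e, Matrix.trace, LinearMap.toMatrix_apply,
    apply_basis_eq_repr e he]

end OrthonormalBasis

namespace RPiM

variable {V : Type*} [AddCommGroup V] [Module ℝ V] (S : RPiM V)

theorem eta_eq_g_xi (x : V) : S.eta x = S.g x S.xi := by
  have h := S.compat x S.xi
  simp only [S.phi_xi, map_zero, S.eta_xi, mul_one] at h
  linarith

theorem g_xi_xi : S.g S.xi S.xi = 1 := by
  rw [← eta_eq_g_xi, S.eta_xi]

theorem paraEinsteinLike_xi_xi (a b c : ℝ) : S.paraEinsteinLike a b c S.xi S.xi = a + b + c := by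
  simp [paraEinsteinLike, S.phi_xi, S.eta_xi, S.g_xi_xi]

variable {ι : Type*} [Fintype ι] [DecidableEq ι] (e : Module.Basis ι ℝ V)

theorem sum_eta_basis_mul_self (he : ∀ i j, S.g (e i) (e j) = if i = j then 1 else 0) :
    ∑ i, S.eta (e i) * S.eta (e i) = 1 := by
  simp only [eta_eq_g_xi, sum_apply_basis_mul_self e he, g_xi_xi]

theorem sum_paraEinsteinLike_basis (he : ∀ i j, S.g (e i) (e j) = if i = j then 1 else 0)
    (a b c : ℝ) :
    ∑ i, S.paraEinsteinLike a b c (e i) (e i) = a * Fintype.card ι + b + c := by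
  have hg : ∑ i, S.g (e i) (e i) = Fintype.card ι := by simp [he]
  have hphi : ∑ i, S.g (e i) (S.phi (e i)) = 0 := by
    rw [sum_apply_basis_map_eq_trace e he, S.tr_phi]
  simp only [paraEinsteinLike, Finset.sum_add_distrib, ← Finset.mul_sum, hg, hphi,
    S.sum_eta_basis_mul_self e he]
  ring

end RPiM

theorem stmt5_general {V : Type*} [AddCommGroup V] [Module ℝ V]
    (n : ℕ) (S : RPiM V)
    (rho : V →ₗ[ℝ] V →ₗ[ℝ] ℝ) (a b c τ : ℝ)
    (e : Module.Basis (Fin (2 * n + 1)) ℝ V)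
    (he : ∀ i j, S.g (e i) (e j) = if i = j then 1 else 0)
    (hEl : ∀ x y, rho x y =
      a * S.g x y + b * (S.g x (S.phi y) + S.eta x * S.eta y) + c * (S.eta x * S.eta y))
    (hrho_xi : ∀ x, rho x S.xi = -(2 * (n : ℝ)) * S.eta x)
    (htau : τ = ∑ i, rho (e i) (e i)) :
    a + b + c = -(2 * (n : ℝ)) ∧ τ = 2 * (n : ℝ) * (a - 1) := by
  have hρ : ∀ x y, rho x y = S.paraEinsteinLike a b c x y := hEl
  have habc : a + b + c = -(2 * (n : ℝ)) := by
    rw [← S.paraEinsteinLike_xi_xi, ← hρ, hrho_xi, S.eta_xi, mul_one]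
  refine ⟨habc, ?_⟩
  rw [htau, Finset.sum_congr rfl fun i _ => hρ (e i) (e i), S.sum_paraEinsteinLike_basis e he,
    Fintype.card_fin]
  push_cast
  linarith

/-- on a `(2n+1)`-dimensional para-Sasaki-like Riemannian Π-manifold that is
para-Einstein-like with constants `(a,b,c)` (i.e. `ρ = a g + b g̃ + c η⊗η`, where the
para-Sasaki-like condition yields `ρ(x,ξ) = −2n η(x)`), one has `a + b + c = −2n` and the
scalar curvature `τ` of `g` (the `g`-trace of `ρ`) equals `2n(a−1)`. -/
theorem stmt5 {V : Type*} [AddCommGroup V] [Module ℝ V] [FiniteDimensional ℝ V]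
    (n : ℕ) (S : RPiM V)
    (rho : V →ₗ[ℝ] V →ₗ[ℝ] ℝ) (a b c τ : ℝ)
    (e : Module.Basis (Fin (2 * n + 1)) ℝ V)
    (he : ∀ i j, S.g (e i) (e j) = if i = j then 1 else 0)
    (hEl : ∀ x y, rho x y =
      a * S.g x y + b * (S.g x (S.phi y) + S.eta x * S.eta y) + c * (S.eta x * S.eta y))
    (hrho_xi : ∀ x, rho x S.xi = -(2 * (n : ℝ)) * S.eta x)
    (htau : τ = ∑ i, rho (e i) (e i)) :
    a + b + c = -(2 * (n : ℝ)) ∧ τ = 2 * (n : ℝ) * (a - 1) :=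
  stmt5_general n S rho a b c τ e he hEl hrho_xi htau
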